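/- Main theorem (canonical HVGs are unigraphs): Let x, y : Fin N → ℝ both be canonical sequences. If for every vertex i the degree of i in HVG(x) equals the degree of i in HVG(y), then HVG(x) = HVG(y) as graphs on Fin N (i.e., they have the same adjacency relation). -/

import Mathlib

/-!
A vertex `i` with `0 < i < N - 1` always sees its two neighbours `i ± 1`, and in a canonical
sequence it has no further neighbour exactly when it is a strict local minimum (a valley): if,
say, `x (i - 1) < x i`, then the nearest point left of `i` that is higher than `i` (it exists
because `x 0` is higher) is a third neighbour. So the valleys of a canonical sequence are its
inner vertices of degree 2, and the two graphs share a valley, e.g. the inner minimum of `x`.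
Deleting a valley removes exactly its two edges and leaves the HVG of the shorter sequence,
which is again canonical and has the same degrees for `x` and `y`; induct on `N`.
-/

/-- The horizontal visibility graph of a sequence `x : Fin N → ℝ`:
`a < b` are adjacent iff `x k < min (x a) (x b)` for all `a < k < b`. -/
def HVG {N : ℕ} (x : Fin N → ℝ) : SimpleGraph (Fin N) where
  Adj a b := (a < b ∧ ∀ k, a < k → k < b → x k < min (x a) (x b)) ∨
             (b < a ∧ ∀ k, b < k → k < a → x k < min (x b) (x a))
  symm := by constructor; intro a b h; tauto
  loopless := by constructor; intro a h; rcases h with ⟨h, -⟩ | ⟨h, -⟩ <;> exact lt_irrefl a h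

/-- Degree of a vertex in the HVG. -/
noncomputable def hvgDegree {N : ℕ} (x : Fin N → ℝ) (v : Fin N) : ℕ :=
  Nat.card {w : Fin N // (HVG x).Adj v w}

lemma Fin.covBy_of_val_add_one_eq {N : ℕ} {a b : Fin N} (h : (a : ℕ) + 1 = b) : a ⋖ b :=
  ⟨Fin.lt_def.2 (by omega), fun c hac hcb => by rw [Fin.lt_def] at hac hcb; omega⟩

lemma Fin.natCard_subtype_succAbove {n : ℕ} (P : Fin (n + 1) → Prop) [DecidablePred P]
    (i : Fin (n + 1)) :
    Nat.card {w // P w} = (if P i then 1 else 0) + Nat.card {j : Fin n // P (i.succAbove j)} := by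
  simp only [Nat.card_eq_fintype_card, Fintype.card_subtype, Finset.card_filter]
  exact Fin.sum_univ_succAbove _ i

lemma SimpleGraph.eq_of_comap_succAbove_eq {n : ℕ} {G H : SimpleGraph (Fin (n + 1))}
    (i : Fin (n + 1)) (hi : ∀ v, G.Adj i v ↔ H.Adj i v)
    (hcomap : G.comap i.succAbove = H.comap i.succAbove) : G = H := by
  ext a b
  rcases i.eq_self_or_eq_succAbove a with rfl | ⟨a, rfl⟩
  · exact hi b
  rcases i.eq_self_or_eq_succAbove b with rfl | ⟨b, rfl⟩
  · rw [G.adj_comm, H.adj_comm]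
    exact hi _
  · exact iff_of_eq (congrFun₂ (SimpleGraph.ext_iff.1 hcomap) a b)

lemma SimpleGraph.three_le_natCard_adj {V : Type*} [Finite V] (G : SimpleGraph V) {v a b c : V}
    (ha : G.Adj v a) (hb : G.Adj v b) (hc : G.Adj v c) (hab : a ≠ b) (hac : a ≠ c) (hbc : b ≠ c) :
    3 ≤ Nat.card {w // G.Adj v w} := by
  change 3 ≤ Nat.card (G.neighborSet v)
  rw [Nat.card_coe_set_eq, ← Set.ncard_eq_three.2 ⟨a, b, c, hab, hac, hbc, rfl⟩]
  exact Set.ncard_le_ncard (by rintro w (rfl | rfl | rfl) <;> assumption)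

namespace HVG

section

variable {N : ℕ} (x : Fin N → ℝ)

lemma adj_iff_of_lt {a b : Fin N} (hab : a < b) :
    (HVG x).Adj a b ↔ ∀ k, a < k → k < b → x k < min (x a) (x b) :=
  ⟨fun h => h.elim And.right fun h' => absurd hab h'.1.not_gt, fun h => Or.inl ⟨hab, h⟩⟩

lemma adj_of_covBy {a b : Fin N} (h : a ⋖ b) : (HVG x).Adj a b :=
  (adj_iff_of_lt x h.lt).2 fun _ hak hkb => absurd hkb (h.2 hak)

lemma eq_top_of_le_two (hN : N ≤ 2) : HVG x = ⊤ := by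
  ext a b
  refine ⟨(HVG x).ne_of_adj, fun hab => ?_⟩
  have covBy : ∀ c d : Fin N, c < d → c ⋖ d := fun c d h =>
    Fin.covBy_of_val_add_one_eq (by rw [Fin.lt_def] at h; omega)
  rcases hab.lt_or_gt with h | h
  · exact adj_of_covBy x (covBy a b h)
  · exact (adj_of_covBy x (covBy b a h)).symm

lemma exists_adj_lt {i j₀ : Fin N} (hj₀ : j₀ < i) (hx : x i < x j₀)
    (hne : ∀ k, j₀ < k → k < i → x k ≠ x i) : ∃ j, j < i ∧ x i < x j ∧ (HVG x).Adj j i := by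
  classical
  set S := Finset.univ.filter fun j => j < i ∧ x i < x j
  have hS : j₀ ∈ S := by simp [S, hj₀, hx]
  obtain ⟨hji, hxj⟩ : S.max' ⟨j₀, hS⟩ < i ∧ x i < x (S.max' ⟨j₀, hS⟩) := by
    simpa [S] using S.max'_mem ⟨j₀, hS⟩
  refine ⟨_, hji, hxj, (adj_iff_of_lt x hji).2 fun k hjk hki => ?_⟩
  have hk : x k < x i := by
    refine lt_of_le_of_ne (not_lt.1 fun hik => hjk.not_ge (S.le_max' k ?_))
      (hne k ((S.le_max' j₀ hS).trans_lt hjk) hki)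
    simp [S, hki, hik]
  exact lt_min (hk.trans hxj) hk

lemma exists_adj_gt {i j₀ : Fin N} (hj₀ : i < j₀) (hx : x i < x j₀)
    (hne : ∀ k, i < k → k < j₀ → x k ≠ x i) : ∃ j, i < j ∧ x i < x j ∧ (HVG x).Adj i j := by
  classical
  set S := Finset.univ.filter fun j => i < j ∧ x i < x j
  have hS : j₀ ∈ S := by simp [S, hj₀, hx]
  obtain ⟨hij, hxj⟩ : i < S.min' ⟨j₀, hS⟩ ∧ x i < x (S.min' ⟨j₀, hS⟩) := by
    simpa [S] using S.min'_mem ⟨j₀, hS⟩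
  refine ⟨_, hij, hxj, (adj_iff_of_lt x hij).2 fun k hik hkj => ?_⟩
  have hk : x k < x i := by
    refine lt_of_le_of_ne (not_lt.1 fun hxk => hkj.not_ge (S.min'_le k ?_))
      (hne k hik (hkj.trans_le (S.min'_le j₀ hS)))
    simp [S, hik, hxk]
  exact lt_min hk (hk.trans hxj)

end

section

variable {N : ℕ} {x : Fin N → ℝ} {i : Fin N}

def IsValley (x : Fin N → ℝ) (i : Fin N) : Prop :=
  ∃ l r, l ⋖ i ∧ i ⋖ r ∧ x i < x l ∧ x i < x r

lemma IsValley.adj_iff (hi : IsValley x i) (c : Fin N) :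
    (HVG x).Adj i c ↔ c ⋖ i ∨ i ⋖ c := by
  obtain ⟨l, r, hl, hr, hxl, hxr⟩ := hi
  refine ⟨fun h => ?_, fun h => h.elim (fun h => (adj_of_covBy x h).symm) (adj_of_covBy x)⟩
  rcases h with ⟨hic, h⟩ | ⟨hci, h⟩
  · rcases (hr.ge_of_gt hic).eq_or_lt with rfl | hrc
    · exact Or.inr hr
    · exact absurd ((h r hr.lt hrc).trans_le (min_le_left _ _)) hxr.not_gt
  · rcases (hl.le_of_lt hci).eq_or_lt' with rfl | hcl
    · exact Or.inl hl
    · exact absurd ((h l hcl hl.lt).trans_le (min_le_right _ _)) hxl.not_gt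

lemma IsValley.hvgDegree_eq_two (hi : IsValley x i) : hvgDegree x i = 2 := by
  obtain ⟨l, r, hl, hr, -, -⟩ := id hi
  have hneighbors : {w | (HVG x).Adj i w} = {l, r} := by
    ext c
    simp only [Set.mem_ofPred_eq, hi.adj_iff, Set.mem_insert_iff, Set.mem_singleton_iff]
    exact or_congr ⟨fun h => h.unique_left hl, fun h => h ▸ hl⟩
      ⟨fun h => h.unique_right hr, fun h => h ▸ hr⟩
  change Nat.card ({w | (HVG x).Adj i w} : Set (Fin N)) = 2
  rw [hneighbors, Nat.card_coe_set_eq, Set.ncard_pair (hl.lt.trans hr.lt).ne]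

def IsInner (k : Fin N) : Prop := 0 < (k : ℕ) ∧ (k : ℕ) < N - 1

lemma IsInner.exists_covBy (hi : IsInner i) : ∃ l r, l ⋖ i ∧ i ⋖ r := by
  obtain ⟨h0, h1⟩ := hi
  exact ⟨⟨i - 1, by omega⟩, ⟨i + 1, by omega⟩, Fin.covBy_of_val_add_one_eq (by simp; omega),
    Fin.covBy_of_val_add_one_eq rfl⟩

lemma IsValley.isInner (hi : IsValley x i) : IsInner i := by
  obtain ⟨l, r, hl, hr, -⟩ := hi
  have := Fin.lt_def.1 hl.lt
  have := Fin.lt_def.1 hr.lt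
  exact ⟨by omega, by omega⟩

structure IsCanonical (x : Fin N → ℝ) : Prop where
  inner_lt : ∀ j k, IsInner k → ¬ IsInner j → x k < x j
  injOn_inner : Set.InjOn x {k | IsInner k}

lemma IsCanonical.of_lt_min (hN : 0 < N)
    (hmax : ∀ k : Fin N, 0 < (k : ℕ) → (k : ℕ) < N - 1 →
      x k < min (x ⟨0, hN⟩) (x ⟨N - 1, by omega⟩))
    (hinj : ∀ k l : Fin N, 0 < (k : ℕ) → (k : ℕ) < N - 1 →
      0 < (l : ℕ) → (l : ℕ) < N - 1 → x k = x l → k = l) : IsCanonical x where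
  inner_lt j k hk hj := by
    have hj' : j = ⟨0, hN⟩ ∨ j = ⟨N - 1, by omega⟩ := by
      simp only [IsInner, Fin.ext_iff] at hj ⊢
      omega
    rcases hj' with rfl | rfl
    · exact (hmax k hk.1 hk.2).trans_le (min_le_left _ _)
    · exact (hmax k hk.1 hk.2).trans_le (min_le_right _ _)
  injOn_inner k hk l hl h := hinj k l hk.1 hk.2 hl.1 hl.2 h

lemma IsCanonical.ne (hx : IsCanonical x) {j : Fin N} (hi : IsInner i) (hij : i ≠ j) :
    x i ≠ x j := by
  by_cases hj : IsInner j
  · exact fun h => hij (hx.injOn_inner hi hj h)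
  · exact (hx.inner_lt j i hi hj).ne

lemma IsCanonical.exists_isValley (hx : IsCanonical x) (hN : 3 ≤ N) : ∃ i, IsValley x i := by
  classical
  obtain ⟨i, hi, hmin⟩ := (Finset.univ.filter IsInner).exists_min_image x
    ⟨⟨1, by omega⟩, by simp only [Finset.mem_filter, Finset.mem_univ, true_and, IsInner]; omega⟩
  replace hi : IsInner i := (Finset.mem_filter.1 hi).2
  have lower : ∀ j, j ≠ i → x i < x j := fun j hji => by
    by_cases hj : IsInner j
    · exact lt_of_le_of_ne (hmin j (by simpa using hj)) (hx.ne hi hji.symm)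
    · exact hx.inner_lt j i hi hj
  obtain ⟨l, r, hl, hr⟩ := hi.exists_covBy
  exact ⟨i, l, r, hl, hr, lower l hl.ne, lower r hr.ne'⟩

lemma IsCanonical.isValley_of_hvgDegree_eq_two (hx : IsCanonical x) (hi : IsInner i)
    (hdeg : hvgDegree x i = 2) : IsValley x i := by
  obtain ⟨l, r, hl, hr⟩ := hi.exists_covBy
  have hN := i.pos
  have hne : ∀ k, k ≠ i → x k ≠ x i := fun k hk => (hx.ne hi hk.symm).symm
  have hcard : ¬ 3 ≤ Nat.card {w // (HVG x).Adj i w} := by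
    unfold hvgDegree at hdeg; omega
  have hil := (adj_of_covBy x hl).symm
  have hir := adj_of_covBy x hr
  refine ⟨l, r, hl, hr, ?_, ?_⟩
  · by_contra hxl
    have hlx : x l < x i := lt_of_le_of_ne (not_lt.1 hxl) (hne l hl.ne)
    obtain ⟨j, hji, hxj, hij⟩ := exists_adj_lt x (j₀ := ⟨0, by omega⟩) (Fin.lt_def.2 hi.1)
      (hx.inner_lt _ i hi (by simp [IsInner])) fun k _ hki => hne k hki.ne
    exact hcard ((HVG x).three_le_natCard_adj hij.symm hil hir
      (ne_of_apply_ne x (hlx.trans hxj).ne') (hji.trans hr.lt).ne (hl.lt.trans hr.lt).ne)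
  · by_contra hxr
    have hrx : x r < x i := lt_of_le_of_ne (not_lt.1 hxr) (hne r hr.ne')
    obtain ⟨j, hij, hxj, hadj⟩ := exists_adj_gt x (j₀ := ⟨N - 1, by omega⟩) (Fin.lt_def.2 hi.2)
      (hx.inner_lt _ i hi (by simp [IsInner])) fun k hik _ => hne k hik.ne'
    exact hcard ((HVG x).three_le_natCard_adj hil hir hadj (hl.lt.trans hr.lt).ne
      (hl.lt.trans hij).ne (ne_of_apply_ne x (hrx.trans hxj).ne))

end

section

variable {n : ℕ} {x y : Fin (n + 1) → ℝ} {i : Fin (n + 1)}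

lemma isInner_succAbove_iff (hi : IsInner i) (j : Fin n) :
    IsInner (i.succAbove j) ↔ IsInner j := by
  unfold Fin.succAbove
  split_ifs with h <;>
    simp only [IsInner, Fin.lt_def, Fin.val_castSucc, Fin.val_succ] at * <;> omega

lemma IsCanonical.comp_succAbove (hx : IsCanonical x) (hi : IsInner i) :
    IsCanonical (x ∘ i.succAbove) where
  inner_lt j k hk hj := hx.inner_lt _ _ ((isInner_succAbove_iff hi k).2 hk)
    (mt (isInner_succAbove_iff hi j).1 hj)
  injOn_inner k hk l hl h := Fin.succAbove_right_injective
    (hx.injOn_inner ((isInner_succAbove_iff hi k).2 hk) ((isInner_succAbove_iff hi l).2 hl) h)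

lemma IsValley.comap_succAbove (hi : IsValley x i) :
    (HVG x).comap i.succAbove = HVG (x ∘ i.succAbove) := by
  have key : ∀ a b : Fin n, a < b →
      ((HVG x).Adj (i.succAbove a) (i.succAbove b) ↔ (HVG (x ∘ i.succAbove)).Adj a b) := by
    intro a b hab
    rw [adj_iff_of_lt x (Fin.strictMono_succAbove i hab), adj_iff_of_lt _ hab]
    refine ⟨fun h k hak hkb => h _ (Fin.strictMono_succAbove i hak)
      (Fin.strictMono_succAbove i hkb), fun h k hak hkb => ?_⟩
    have between : ∀ p, p ≠ i → i.succAbove a < p → p < i.succAbove b →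
        x p < min (x (i.succAbove a)) (x (i.succAbove b)) := by
      intro p hpi hap hpb
      obtain ⟨p, rfl⟩ := Fin.exists_succAbove_eq hpi
      exact h p (Fin.succAbove_lt_succAbove_iff.1 hap) (Fin.succAbove_lt_succAbove_iff.1 hpb)
    rcases eq_or_ne i k with rfl | hik
    swap
    · exact between k hik.symm hak hkb
    -- Each neighbour of the valley is an endpoint or lies strictly between the endpoints.
    obtain ⟨l, r, hl, hr, hxl, hxr⟩ := hi
    have hla : x l ≤ x (i.succAbove a) := by
      rcases (hl.le_of_lt hak).eq_or_lt with hal | hal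
      · rw [hal]
      · exact (between l hl.ne hal (hl.lt.trans hkb)).le.trans (min_le_left _ _)
    have hrb : x r ≤ x (i.succAbove b) := by
      rcases (hr.ge_of_gt hkb).eq_or_lt' with hbr | hrb
      · rw [hbr]
      · exact (between r hr.ne' (hak.trans hr.lt) hrb).le.trans (min_le_right _ _)
    exact lt_min (hxl.trans_le hla) (hxr.trans_le hrb)
  ext a b
  rcases lt_trichotomy a b with hab | rfl | hab
  · exact key a b hab
  · simp
  · rw [SimpleGraph.comap_adj, (HVG x).adj_comm, (HVG (x ∘ i.succAbove)).adj_comm]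
    exact key b a hab

lemma IsValley.hvgDegree_comp_succAbove_eq (hx : IsValley x i) (hy : IsValley y i) {j : Fin n}
    (hdeg : hvgDegree x (i.succAbove j) = hvgDegree y (i.succAbove j)) :
    hvgDegree (x ∘ i.succAbove) j = hvgDegree (y ∘ i.succAbove) j := by
  classical
  have hadj : (HVG x).Adj (i.succAbove j) i ↔ (HVG y).Adj (i.succAbove j) i := by
    rw [(HVG x).adj_comm, (HVG y).adj_comm, hx.adj_iff, hy.adj_iff]
  unfold hvgDegree at hdeg ⊢
  rw [Fin.natCard_subtype_succAbove _ i, Fin.natCard_subtype_succAbove _ i] at hdeg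
  rw [← hx.comap_succAbove, ← hy.comap_succAbove]
  simp only [hadj] at hdeg
  exact Nat.add_left_cancel hdeg

theorem eq_of_hvgDegree_eq (hx : IsCanonical x) (hy : IsCanonical y)
    (hdeg : ∀ i, hvgDegree x i = hvgDegree y i) : HVG x = HVG y := by
  induction n with
  | zero => exact (eq_top_of_le_two x (by omega)).trans (eq_top_of_le_two y (by omega)).symm
  | succ n ih =>
    rcases Nat.lt_or_ge (n + 2) 3 with hN | hN
    · exact (eq_top_of_le_two x (by omega)).trans (eq_top_of_le_two y (by omega)).symm
    obtain ⟨i, hxi⟩ := hx.exists_isValley hN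
    have hyi : IsValley y i := hy.isValley_of_hvgDegree_eq_two hxi.isInner
      ((hdeg i).symm.trans hxi.hvgDegree_eq_two)
    refine SimpleGraph.eq_of_comap_succAbove_eq i (fun v => by rw [hxi.adj_iff, hyi.adj_iff]) ?_
    rw [hxi.comap_succAbove, hyi.comap_succAbove]
    exact ih (hx.comp_succAbove hxi.isInner) (hy.comp_succAbove hxi.isInner)
      fun j => hxi.hvgDegree_comp_succAbove_eq hyi (hdeg _)

end

end HVG

theorem hvg_canonical_unigraph {N : ℕ} (hN : 2 ≤ N) (x y : Fin N → ℝ)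
    (hmax : ∀ k : Fin N, 0 < (k : ℕ) → (k : ℕ) < N - 1 →
      x k < min (x ⟨0, by omega⟩) (x ⟨N - 1, by omega⟩))
    (hinj : ∀ k l : Fin N, 0 < (k : ℕ) → (k : ℕ) < N - 1 →
      0 < (l : ℕ) → (l : ℕ) < N - 1 → x k = x l → k = l)
    (hmax' : ∀ k : Fin N, 0 < (k : ℕ) → (k : ℕ) < N - 1 →
      y k < min (y ⟨0, by omega⟩) (y ⟨N - 1, by omega⟩))
    (hinj' : ∀ k l : Fin N, 0 < (k : ℕ) → (k : ℕ) < N - 1 →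
      0 < (l : ℕ) → (l : ℕ) < N - 1 → y k = y l → k = l)
    (hdeg : ∀ i : Fin N, hvgDegree x i = hvgDegree y i) :
    HVG x = HVG y := by
  have hx := HVG.IsCanonical.of_lt_min (by omega) hmax hinj
  have hy := HVG.IsCanonical.of_lt_min (by omega) hmax' hinj'
  obtain ⟨n, rfl⟩ : ∃ n, N = n + 1 := ⟨N - 1, by omega⟩
  exact HVG.eq_of_hvgDegree_eq hx hy hdeg
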